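/- Let 𝒜 ∈ 𝒯_{3,2} with a_{111}=a_{222}=1, a_{112}=a_{122}=−1 and all other entries zero. Then 𝒜 is copositive (𝒜x^3 = (x₁+x₂)(x₁−x₂)² ≥ 0 for x ≥ 0), every principal sub-tensor 𝒜_α (α nonempty ⊆ {1,2}) is ℝ^{|α|}₊-nonsingular, yet 𝒜 is not strictly copositive (𝒜x^3 = 0 at x = (1,1)). -/

import Mathlib

open scoped BigOperators
open Metric Filter

noncomputable section

/-- An `m`-th order `n`-dimensional tensor with `m = k+1`, the first index separated:
`A i f` is the entry `a_{i, f 0, ..., f (k-1)}`. -/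
abbrev Tensor (k n : ℕ) : Type := Fin n → (Fin k → Fin n) → ℝ

/-- `𝒜 x^{m-1}`, with `(𝒜 x^{m-1})_i = ∑ a_{i i₂ … i_m} x_{i₂} ⋯ x_{i_m}`. -/
def tApp {k n : ℕ} (A : Tensor k n) (x : EuclideanSpace ℝ (Fin n)) :
    EuclideanSpace ℝ (Fin n) :=
  WithLp.toLp 2 (fun i => ∑ f : Fin k → Fin n, A i f * ∏ j, x (f j))

/-- `𝒜 x^m = xᵀ (𝒜 x^{m-1})`. -/
def tForm {k n : ℕ} (A : Tensor k n) (x : EuclideanSpace ℝ (Fin n)) : ℝ :=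
  ∑ i, x i * tApp A x i

/-- `K` is closed under multiplication by nonnegative scalars. -/
def IsConeSet {n : ℕ} (K : Set (EuclideanSpace ℝ (Fin n))) : Prop :=
  ∀ x ∈ K, ∀ t : ℝ, 0 ≤ t → t • x ∈ K

/-- Frobenius distance between two tensors. -/
def frobDist {k n : ℕ} (A B : Tensor k n) : ℝ :=
  Real.sqrt (∑ i, ∑ f : Fin k → Fin n, (A i f - B i f) ^ 2)

/-- The metric `δ(K₁,K₂) = sup_{‖z‖ ≤ 1} |dist(z,K₁) − dist(z,K₂)|` on cones. -/
def coneDist {n : ℕ} (K₁ K₂ : Set (EuclideanSpace ℝ (Fin n))) : ℝ :=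
  ⨆ z : closedBall (0 : EuclideanSpace ℝ (Fin n)) 1,
    |infDist (z : EuclideanSpace ℝ (Fin n)) K₁ - infDist (z : EuclideanSpace ℝ (Fin n)) K₂|

/-- Solution set of the tensor complementarity problem TCP(K, q, 𝒜). -/
def SOL {k n : ℕ} (K : Set (EuclideanSpace ℝ (Fin n))) (q : EuclideanSpace ℝ (Fin n))
    (A : Tensor k n) : Set (EuclideanSpace ℝ (Fin n)) :=
  {x | x ∈ K ∧ tApp A x + q ∈ ProperCone.innerDual K ∧ inner ℝ x (tApp A x + q) = (0 : ℝ)}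

/-- The nonnegative orthant in `ℝ^n`. -/
def orthant (n : ℕ) : Set (EuclideanSpace ℝ (Fin n)) := {x | ∀ i, 0 ≤ x i}

/-- `Tpos(K, 𝒜) = {𝒜 x^{m-1} : x ∈ K}`. -/
def Tpos {k n : ℕ} (K : Set (EuclideanSpace ℝ (Fin n))) (A : Tensor k n) :
    Set (EuclideanSpace ℝ (Fin n)) := tApp A '' K

/-- The tensor of Example 4.1: `a₁₁₁ = a₂₂₂ = 1`, `a₁₁₂ = a₁₂₂ = −1`, rest zero. -/
def exTensor13 : Tensor 2 2 := fun i f =>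
  if i = 0 ∧ f 0 = 0 ∧ f 1 = 0 then 1
  else if i = 1 ∧ f 0 = 1 ∧ f 1 = 1 then 1
  else if i = 0 ∧ f 0 = 0 ∧ f 1 = 1 then -1
  else if i = 0 ∧ f 0 = 1 ∧ f 1 = 1 then -1
  else 0


lemma tApp0_aux (x : EuclideanSpace ℝ (Fin 2)) :
    tApp exTensor13 x 0 = x 0 * x 0 - x 0 * x 1 - x 1 * x 1 := by
  rw [tApp]
  simp only [WithLp.ofLp_toLp]
  rw [← (finTwoArrowEquiv (Fin 2)).symm.sum_comp]
  simp only [finTwoArrowEquiv_symm_apply, Fintype.sum_prod_type, Fin.sum_univ_two,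
    Fin.prod_univ_two, Matrix.cons_val_zero, Matrix.cons_val_one, Matrix.head_cons, exTensor13]
  norm_num
  ring

lemma tApp1_aux (x : EuclideanSpace ℝ (Fin 2)) :
    tApp exTensor13 x 1 = x 1 * x 1 := by
  rw [tApp]
  simp only [WithLp.ofLp_toLp]
  rw [← (finTwoArrowEquiv (Fin 2)).symm.sum_comp]
  simp only [finTwoArrowEquiv_symm_apply, Fintype.sum_prod_type, Fin.sum_univ_two,
    Fin.prod_univ_two, Matrix.cons_val_zero, Matrix.cons_val_one, Matrix.head_cons, exTensor13]
  norm_num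

lemma tForm_aux (x : EuclideanSpace ℝ (Fin 2)) :
    tForm exTensor13 x = (x 0 + x 1) * (x 0 - x 1) ^ 2 := by
  rw [tForm, Fin.sum_univ_two, tApp0_aux, tApp1_aux]
  ring

/-- `exTensor13` is copositive, each principal sub-tensor is
nonsingular over the corresponding nonnegative orthant, yet it is not strictly copositive. -/
theorem stmt13 :
    (∀ x : EuclideanSpace ℝ (Fin 2), (∀ i, 0 ≤ x i) → 0 ≤ tForm exTensor13 x) ∧
    (∀ α : Finset (Fin 2), α.Nonempty →
      ∀ x : EuclideanSpace ℝ (Fin 2), (∀ i, i ∉ α → x i = 0) → (∀ i, 0 ≤ x i) →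
        x ≠ 0 → ∃ i ∈ α, tApp exTensor13 x i ≠ 0) ∧
    (∃ x : EuclideanSpace ℝ (Fin 2), (∀ i, 0 ≤ x i) ∧ x ≠ 0 ∧ tForm exTensor13 x = 0) := by
  refine ⟨?_, ?_, ?_⟩
  · intro x hx
    rw [tForm_aux]
    exact mul_nonneg (add_nonneg (hx 0) (hx 1)) (sq_nonneg _)
  · intro α hα x hsupp hx hx0
    by_cases h1 : x 1 = 0
    · have h0 : x 0 ≠ 0 := by
        intro h0
        apply hx0
        ext i
        fin_cases i
        · exact h0
        · exact h1
      have h0mem : (0 : Fin 2) ∈ α := by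
        by_contra hmem
        exact h0 (hsupp 0 hmem)
      refine ⟨0, h0mem, ?_⟩
      rw [tApp0_aux, h1]
      intro h
      apply h0
      have : x 0 * x 0 = 0 := by linarith [h]
      exact (mul_self_eq_zero).mp this
    · have h1mem : (1 : Fin 2) ∈ α := by
        by_contra hmem
        exact h1 (hsupp 1 hmem)
      refine ⟨1, h1mem, ?_⟩
      rw [tApp1_aux]
      exact mul_ne_zero h1 h1
  · refine ⟨WithLp.toLp 2 (fun _ => 1 : Fin 2 → ℝ), fun i => by simp, ?_, ?_⟩
    · intro h
      have : (1 : ℝ) = 0 := congrArg (fun v : EuclideanSpace ℝ (Fin 2) => v 0) h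
      norm_num at this
    · rw [tForm_aux]
      norm_num

end
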